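/- For any t-spread strongly stable collection (L_d)_{d≥1} with L_d ⊆ M_{n,d,t} and shad_t(L_d) ⊆ L_{d+1}, there exists a (unique) collection (L'_d)_{d≥1} with each L'_d ⊆ M_{n,d,t} a t-spread lex set, |L'_d| = |L_d|, and shad_t(L'_d) ⊆ L'_{d+1} for all d. (Existence of I^{t-lex} with the same f_t-vector.) -/

import Mathlib

open Finset

/-- The set of `t`-spread "monomials" of degree `d` in variables `x_1,...,x_n`,
identified with `d`-element subsets of `{1,...,n}` with consecutive gaps `≥ t`. -/
def M (n d t : ℕ) : Finset (Finset ℕ) :=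
  (Finset.powersetCard d (Finset.Icc 1 n)).filter
    (fun F => ∀ i ∈ F, ∀ j ∈ F, i < j → i + t ≤ j)

/-- The `τ`-shadow of a family `L ⊆ M n d t`. -/
def shad (τ n d : ℕ) (L : Finset (Finset ℕ)) : Finset (Finset ℕ) :=
  (M n (d + 1) τ).filter (fun G => ∃ F ∈ L, F ⊆ G)

/-- `F >_lex G` : the smallest element of the symmetric difference belongs to `F`. -/
def lexGT (F G : Finset ℕ) : Prop :=
  ∃ k, k ∈ F ∧ k ∉ G ∧ ∀ j < k, (j ∈ F ↔ j ∈ G)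

/-- `L` is a `t`-spread lex set in `M n d t` (a lex up-set). -/
def IsLexSet (n d t : ℕ) (L : Finset (Finset ℕ)) : Prop :=
  L ⊆ M n d t ∧ ∀ u ∈ L, ∀ v ∈ M n d t, lexGT v u → v ∈ L

/-- `L` is a `t`-spread strongly stable set in `M n d t`. -/
def IsSSS (n d t : ℕ) (L : Finset (Finset ℕ)) : Prop :=
  L ⊆ M n d t ∧ ∀ F ∈ L, ∀ j ∈ F, ∀ i < j, i ∉ F →
    insert i (F.erase j) ∈ M n d t → insert i (F.erase j) ∈ L

/-- number of members of `L` with maximum element `= i`. -/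
def mEq (i : ℕ) (L : Finset (Finset ℕ)) : ℕ :=
  (L.filter (fun F => i ∈ F ∧ ∀ j ∈ F, j ≤ i)).card

/-- number of members of `L` with maximum element `≤ i`. -/
def mLe (i : ℕ) (L : Finset (Finset ℕ)) : ℕ :=
  (L.filter (fun F => ∀ j ∈ F, j ≤ i)).card

/-!
Take `L'_d` to be the initial lex segment of `M n d t` of length `|L_d|`; uniqueness holds
because a lex set is determined by its size. The shadow of a lex set is lex and lex sets are
nested by size, so it suffices that `|shad L'_d| ≤ |shad L_d|`. For strongly stable `L`,
removing the maximum identifies `shad L` with the pairs `(F, k)`, `F ∈ L`, `max F + t ≤ k ≤ n`,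
whence `|shad L| = ∑_{k=1}^n mLe (k - t) L`.

It remains to show `mLe i L' ≤ mLe i L` for lex `L'` and strongly stable `L` with
`|L'| ≤ |L|`. Induction on `n` reduces this to `i = n - 1`, i.e. to comparing the numbers
`u, u'` of members containing `n`. Group the members by what remains after removing their
maximum: for `L` the fibres over the `u` sets `G` with `G ∪ {n} ∈ L` are complete, while for
`L'` all nonempty fibres lie over the first `u' + 1` elements of `M (n - t) (d - 1) t` in lex
order, the last of these fibres being incomplete. Induction on `d`, applied to the sets `G`,
compares the two resulting sums of fibre capacities and gives `|L'| - u' ≤ |L| - u`.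
-/

open scoped Classical

section Spread

variable {n d t : ℕ}

theorem mem_M {F : Finset ℕ} :
    F ∈ M n d t ↔ F ⊆ Icc 1 n ∧ #F = d ∧ ∀ i ∈ F, ∀ j ∈ F, i < j → i + t ≤ j := by
  simp [M, mem_powersetCard, and_assoc]

theorem one_le_of_mem_M {F : Finset ℕ} (hF : F ∈ M n d t) {j : ℕ} (hj : j ∈ F) : 1 ≤ j :=
  (mem_Icc.1 ((mem_M.1 hF).1 hj)).1

theorem le_of_mem_M {F : Finset ℕ} (hF : F ∈ M n d t) {j : ℕ} (hj : j ∈ F) : j ≤ n :=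
  (mem_Icc.1 ((mem_M.1 hF).1 hj)).2

theorem M_mono {m : ℕ} (h : m ≤ n) : M m d t ⊆ M n d t := fun _ hF => by
  rw [mem_M] at hF ⊢
  exact ⟨hF.1.trans (Icc_subset_Icc_right h), hF.2⟩

theorem inter_M_eq_filter {A : Finset (Finset ℕ)} (hA : A ⊆ M n d t) (m : ℕ) :
    A ∩ M m d t = {F ∈ A | ∀ j ∈ F, j ≤ m} := by
  ext F
  simp only [mem_inter, mem_filter, and_congr_right_iff]
  intro hFA
  have hF := mem_M.1 (hA hFA)
  refine ⟨fun h j hj => le_of_mem_M h hj, fun h => mem_M.2 ⟨fun j hj => ?_, hF.2⟩⟩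
  exact mem_Icc.2 ⟨one_le_of_mem_M (hA hFA) hj, h j hj⟩

theorem mLe_eq_card_inter {A : Finset (Finset ℕ)} (hA : A ⊆ M n d t) (m : ℕ) :
    mLe m A = #(A ∩ M m d t) := by
  rw [inter_M_eq_filter hA, mLe]

theorem mLe_inter_M {A : Finset (Finset ℕ)} (hA : A ⊆ M n d t) {i m : ℕ} (hi : i ≤ m) :
    mLe i (A ∩ M m d t) = mLe i A := by
  rw [mLe_eq_card_inter (inter_subset_left.trans hA), mLe_eq_card_inter hA, inter_assoc,
    inter_eq_right.2 (M_mono hi)]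

theorem mLe_of_le {A : Finset (Finset ℕ)} (hA : A ⊆ M n d t) {i : ℕ} (hi : n ≤ i) :
    mLe i A = #A := by
  rw [mLe_eq_card_inter hA, inter_eq_left.2 (hA.trans (M_mono hi))]

theorem erase_mem_M {F : Finset ℕ} (hF : F ∈ M n (d + 1) t) {x : ℕ} (hx : x ∈ F) :
    F.erase x ∈ M n d t := by
  obtain ⟨hsub, hcard, hsp⟩ := mem_M.1 hF
  refine mem_M.2 ⟨(erase_subset x F).trans hsub, by rw [card_erase_of_mem hx, hcard]; rfl, ?_⟩
  exact fun i hi j hj => hsp i (mem_of_mem_erase hi) j (mem_of_mem_erase hj)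

theorem IsSSS.inter_M {L : Finset (Finset ℕ)} (hL : IsSSS n d t L) {m : ℕ} (hm : m ≤ n) :
    IsSSS m d t (L ∩ M m d t) := by
  refine ⟨inter_subset_right, fun F hF j hj i hij hiF hM => mem_inter.2 ⟨?_, hM⟩⟩
  exact hL.2 F (mem_inter.1 hF).1 j hj i hij hiF (M_mono hm hM)

theorem IsLexSet.inter_M {L : Finset (Finset ℕ)} (hL : IsLexSet n d t L) {m : ℕ} (hm : m ≤ n) :
    IsLexSet m d t (L ∩ M m d t) :=
  ⟨inter_subset_right, fun u hu v hv hvu =>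
    mem_inter.2 ⟨hL.2 u (mem_inter.1 hu).1 v (M_mono hm hv) hvu, hv⟩⟩

end Spread

section Lex

variable {n d t : ℕ}

theorem lexGT_irrefl (F : Finset ℕ) : ¬ lexGT F F := fun ⟨_, hk, hk', _⟩ => hk' hk

theorem lexGT_trans {F G H : Finset ℕ} (h₁ : lexGT F G) (h₂ : lexGT G H) : lexGT F H := by
  obtain ⟨k₁, hk₁F, hk₁G, hb₁⟩ := h₁
  obtain ⟨k₂, hk₂G, hk₂H, hb₂⟩ := h₂
  rcases lt_trichotomy k₁ k₂ with h | rfl | h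
  · exact ⟨k₁, hk₁F, fun hk₁H => hk₁G ((hb₂ k₁ h).2 hk₁H),
      fun j hj => (hb₁ j hj).trans (hb₂ j (hj.trans h))⟩
  · exact ⟨k₁, hk₁F, hk₂H, fun j hj => (hb₁ j hj).trans (hb₂ j hj)⟩
  · exact ⟨k₂, (hb₁ k₂ h).2 hk₂G, hk₂H, fun j hj => (hb₁ j (hj.trans h)).trans (hb₂ j hj)⟩

theorem lexGT_or_lexGT_of_ne {F G : Finset ℕ} (h : F ≠ G) : lexGT F G ∨ lexGT G F := by
  have hex : ∃ k, ¬ (k ∈ F ↔ k ∈ G) := by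
    by_contra! hall
    exact h (Finset.ext hall)
  have hbelow : ∀ j < Nat.find hex, (j ∈ F ↔ j ∈ G) := fun j hj => not_not.1 (Nat.find_min hex hj)
  by_cases hk : Nat.find hex ∈ F
  · exact Or.inl ⟨_, hk, fun hk' => Nat.find_spec hex (iff_of_true hk hk'), hbelow⟩
  · exact Or.inr ⟨_, by simpa [hk] using Nat.find_spec hex, hk, fun j hj => (hbelow j hj).symm⟩

noncomputable def lexRank (n d t : ℕ) (F : Finset ℕ) : ℕ :=
  #{G ∈ M n d t | lexGT G F}

noncomputable def lexSeg (n d t m : ℕ) : Finset (Finset ℕ) :=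
  {F ∈ M n d t | lexRank n d t F < m}

theorem lexRank_lt_lexRank {F G : Finset ℕ} (hF : F ∈ M n d t) (h : lexGT F G) :
    lexRank n d t F < lexRank n d t G := by
  refine card_lt_card ((ssubset_iff_of_subset fun H hH => ?_).2 ⟨F, ?_, ?_⟩)
  · exact mem_filter.2 ⟨(mem_filter.1 hH).1, lexGT_trans (mem_filter.1 hH).2 h⟩
  · exact mem_filter.2 ⟨hF, h⟩
  · simp [lexGT_irrefl]

theorem lexRank_injOn : Set.InjOn (lexRank n d t) (M n d t) := by
  intro F hF G hG hFG
  by_contra hne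
  rcases lexGT_or_lexGT_of_ne hne with h | h
  · exact (lexRank_lt_lexRank hF h).ne hFG
  · exact (lexRank_lt_lexRank hG h).ne hFG.symm

theorem lexRank_lt_card {F : Finset ℕ} (hF : F ∈ M n d t) : lexRank n d t F < #(M n d t) :=
  card_lt_card (filter_ssubset.2 ⟨F, hF, lexGT_irrefl F⟩)

theorem image_lexRank : (M n d t).image (lexRank n d t) = range #(M n d t) := by
  refine eq_of_subset_of_card_le (fun r hr => ?_) ?_
  · obtain ⟨F, hF, rfl⟩ := mem_image.1 hr
    exact mem_range.2 (lexRank_lt_card hF)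
  · rw [card_range, card_image_of_injOn lexRank_injOn]

theorem card_lexSeg (m : ℕ) : #(lexSeg n d t m) = min m #(M n d t) := by
  have hfilter : (range #(M n d t)).filter (· < m) = range (min m #(M n d t)) := by
    ext r
    simp only [mem_filter, mem_range]
    omega
  rw [← card_range (min m _), ← hfilter, ← image_lexRank, filter_image,
    card_image_of_injOn (lexRank_injOn.mono (filter_subset _ _)), lexSeg]

theorem card_lexSeg_of_le {m : ℕ} (h : m ≤ #(M n d t)) : #(lexSeg n d t m) = m := by
  rw [card_lexSeg]
  omega

theorem lexSeg_subset_M (m : ℕ) : lexSeg n d t m ⊆ M n d t := filter_subset _ _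

theorem lexSeg_mono : Monotone (lexSeg n d t) := fun _ _ h _ hF => by
  rw [lexSeg, mem_filter] at hF ⊢
  exact ⟨hF.1, hF.2.trans_le h⟩

theorem isLexSet_lexSeg (m : ℕ) : IsLexSet n d t (lexSeg n d t m) := by
  refine ⟨lexSeg_subset_M m, fun u hu v hv hvu => mem_filter.2 ⟨hv, ?_⟩⟩
  exact (lexRank_lt_lexRank hv hvu).trans (mem_filter.1 hu).2

theorem IsLexSet.eq_lexSeg {A : Finset (Finset ℕ)} (hA : IsLexSet n d t A) :
    A = lexSeg n d t #A := by
  refine eq_of_subset_of_card_le (fun F hF => mem_filter.2 ⟨hA.1 hF, ?_⟩) ?_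
  · refine card_lt_card ((ssubset_iff_of_subset fun G hG => ?_).2 ⟨F, hF, ?_⟩)
    · exact hA.2 F hF G (mem_filter.1 hG).1 (mem_filter.1 hG).2
    · simp [lexGT_irrefl]
  · rw [card_lexSeg]
    exact min_le_left _ _

theorem IsLexSet.subset_of_card_le {A B : Finset (Finset ℕ)} (hA : IsLexSet n d t A)
    (hB : IsLexSet n d t B) (h : #A ≤ #B) : A ⊆ B :=
  hA.eq_lexSeg.trans_subset (hB.eq_lexSeg ▸ lexSeg_mono h)

theorem IsLexSet.isSSS {L : Finset (Finset ℕ)} (hL : IsLexSet n d t L) : IsSSS n d t L := by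
  refine ⟨hL.1, fun F hF j hj i hij hiF hM => hL.2 F hF _ hM ⟨i, mem_insert_self i _, hiF, ?_⟩⟩
  intro l hl
  rw [mem_insert, mem_erase]
  exact ⟨fun h => h.resolve_left hl.ne |>.2, fun h => Or.inr ⟨by omega, h⟩⟩

end Lex

section Fibers

variable {n d t : ℕ}

/-- The largest element of `F`; `0` when `F = ∅`. -/
def maxElt (F : Finset ℕ) : ℕ := F.sup id

theorem le_maxElt {F : Finset ℕ} {x : ℕ} (h : x ∈ F) : x ≤ maxElt F := le_sup (f := id) h

theorem maxElt_mem {F : Finset ℕ} (h : F.Nonempty) : maxElt F ∈ F := by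
  obtain ⟨x, hx, hsup⟩ := exists_mem_eq_sup F h id
  rwa [maxElt, hsup]

theorem maxElt_mem_of_mem_M {F : Finset ℕ} (hF : F ∈ M n (d + 1) t) : maxElt F ∈ F :=
  maxElt_mem (card_pos.1 ((mem_M.1 hF).2.1.symm ▸ d.succ_pos))

/-- The `k` that can be added to `G` as a new maximum inside `M n (d + 1) t`. -/
def topExt (n t : ℕ) (G : Finset ℕ) : Finset ℕ := {k ∈ Icc 1 n | ∀ x ∈ G, x + t ≤ k}

theorem notMem_of_mem_topExt (ht : 1 ≤ t) {G : Finset ℕ} {k : ℕ} (hk : k ∈ topExt n t G) :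
    k ∉ G := fun hkG => by
  have := (mem_filter.1 hk).2 k hkG
  omega

theorem maxElt_insert_of_mem_topExt {G : Finset ℕ} {k : ℕ} (hk : k ∈ topExt n t G) :
    maxElt (insert k G) = k := by
  rw [maxElt, sup_insert, id, sup_eq_left]
  exact Finset.sup_le fun x hx => by have := (mem_filter.1 hk).2 x hx; simp only [id]; omega

theorem insert_mem_M (ht : 1 ≤ t) {G : Finset ℕ} (hG : G ∈ M n d t) {k : ℕ}
    (hk : k ∈ topExt n t G) : insert k G ∈ M n (d + 1) t := by
  obtain ⟨hkI, hkG⟩ := mem_filter.1 hk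
  obtain ⟨hsub, hcard, hsp⟩ := mem_M.1 hG
  refine mem_M.2 ⟨insert_subset hkI hsub, ?_, ?_⟩
  · rw [card_insert_of_notMem (notMem_of_mem_topExt ht hk), hcard]
  · intro i hi j hj hij
    rcases mem_insert.1 hi with rfl | hiG <;> rcases mem_insert.1 hj with rfl | hjG
    · omega
    · have := hkG j hjG; omega
    · exact hkG i hiG
    · exact hsp i hiG j hjG hij

theorem self_mem_topExt (hn : 1 ≤ n) {G : Finset ℕ} (hG : G ∈ M (n - t) d t) :
    n ∈ topExt n t G :=
  mem_filter.2 ⟨mem_Icc.2 ⟨hn, le_rfl⟩, fun x hx => by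
    have := one_le_of_mem_M hG hx; have := le_of_mem_M hG hx; omega⟩

theorem maxElt_mem_topExt {F : Finset ℕ} (hF : F ∈ M n (d + 1) t) :
    maxElt F ∈ topExt n t (F.erase (maxElt F)) := by
  have hmax := maxElt_mem_of_mem_M hF
  refine mem_filter.2 ⟨(mem_M.1 hF).1 hmax, fun x hx => ?_⟩
  obtain ⟨hne, hxF⟩ := mem_erase.1 hx
  exact (mem_M.1 hF).2.2 x hxF _ hmax (lt_of_le_of_ne (le_maxElt hxF) hne)

theorem erase_maxElt_mem_M {F : Finset ℕ} (hF : F ∈ M n (d + 1) t) :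
    F.erase (maxElt F) ∈ M (n - t) d t := by
  have hF' := erase_mem_M hF (maxElt_mem_of_mem_M hF)
  have hmax := mem_filter.1 (maxElt_mem_topExt hF)
  refine mem_M.2 ⟨fun x hx => mem_Icc.2 ⟨one_le_of_mem_M hF' hx, ?_⟩, (mem_M.1 hF').2⟩
  have := hmax.2 x hx
  have := (mem_Icc.1 hmax.1).2
  omega

def fiber (A : Finset (Finset ℕ)) (G : Finset ℕ) : Finset (Finset ℕ) :=
  {F ∈ A | F.erase (maxElt F) = G}

theorem card_fiber (ht : 1 ≤ t) {A : Finset (Finset ℕ)} (hA : A ⊆ M n (d + 1) t)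
    (G : Finset ℕ) : #(fiber A G) = #{k ∈ topExt n t G | insert k G ∈ A} := by
  refine card_nbij' maxElt (insert · G) (fun F hF => ?_) (fun k hk => ?_) (fun F hF => ?_)
    (fun k hk => maxElt_insert_of_mem_topExt (mem_filter.1 hk).1)
  · obtain ⟨hFA, rfl⟩ := mem_filter.1 hF
    refine mem_filter.2 ⟨maxElt_mem_topExt (hA hFA), ?_⟩
    rwa [insert_erase (maxElt_mem_of_mem_M (hA hFA))]
  · obtain ⟨hk, hkA⟩ := mem_filter.1 hk
    refine mem_filter.2 ⟨hkA, ?_⟩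
    rw [maxElt_insert_of_mem_topExt hk, erase_insert (notMem_of_mem_topExt ht hk)]
  · obtain ⟨hFA, rfl⟩ := mem_filter.1 hF
    exact insert_erase (maxElt_mem_of_mem_M (hA hFA))

theorem card_eq_sum_card_fiber {A : Finset (Finset ℕ)} (hA : A ⊆ M n (d + 1) t) :
    #A = ∑ G ∈ M (n - t) d t, #(fiber A G) :=
  card_eq_sum_card_fiberwise fun _ hF => erase_maxElt_mem_M (hA hF)

theorem sum_card_topExt {m : ℕ} {A : Finset (Finset ℕ)} (hA : A ⊆ M m d t) :
    ∑ G ∈ A, #(topExt n t G) = ∑ k ∈ Icc 1 n, mLe (k - t) A := by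
  simp only [topExt, mLe, card_filter]
  rw [sum_comm]
  refine sum_congr rfl fun k _ => sum_congr rfl fun G hG => ?_
  have hiff : (∀ x ∈ G, x + t ≤ k) ↔ ∀ x ∈ G, x ≤ k - t :=
    forall₂_congr fun x hx => by have := one_le_of_mem_M (hA hG) hx; omega
  simp only [hiff]

end Fibers

section Shadow

variable {n d t : ℕ}

theorem mem_shad {L : Finset (Finset ℕ)} {G : Finset ℕ} :
    G ∈ shad t n d L ↔ G ∈ M n (d + 1) t ∧ ∃ F ∈ L, F ⊆ G := mem_filter

theorem IsSSS.erase_maxElt_mem {L : Finset (Finset ℕ)} (hL : IsSSS n d t L) {G : Finset ℕ}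
    (hG : G ∈ shad t n d L) : G.erase (maxElt G) ∈ L := by
  obtain ⟨hGM, F, hFL, hFG⟩ := mem_shad.1 hG
  obtain ⟨x, hxF, rfl⟩ := exists_eq_insert_iff.2
    ⟨hFG, by rw [(mem_M.1 (hL.1 hFL)).2.1, (mem_M.1 hGM).2.1]⟩
  set m := maxElt (insert x F)
  by_cases hx : x = m
  · rwa [← hx, erase_insert hxF]
  -- otherwise `G \ {m}` arises from `F` by moving `m` down to `x`
  have hmF : m ∈ F := (mem_insert.1 (maxElt_mem_of_mem_M hGM)).resolve_left (Ne.symm hx)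
  have hxm : x < m := lt_of_le_of_ne (le_maxElt (mem_insert_self x F)) hx
  have heq : (insert x F).erase m = insert x (F.erase m) := erase_insert_of_ne hx
  rw [heq]
  exact hL.2 F hFL m hmF x hxm hxF (heq ▸ erase_mem_M hGM (maxElt_mem_of_mem_M hGM))

theorem IsSSS.card_shad (ht : 1 ≤ t) {L : Finset (Finset ℕ)} (hL : IsSSS n d t L) :
    #(shad t n d L) = ∑ F ∈ L, #(topExt n t F) := by
  rw [card_eq_sum_card_fiberwise fun G hG => hL.erase_maxElt_mem hG]
  refine sum_congr rfl fun F hF => (card_fiber ht (filter_subset _ _) F).trans ?_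
  rw [filter_true_of_mem fun k hk => ?_]
  exact mem_shad.2 ⟨insert_mem_M ht (hL.1 hF) hk, F, hF, subset_insert k F⟩

theorem exists_gt_of_lexGT {H G : Finset ℕ} (hcard : #H ≤ #G) {k : ℕ} (hkH : k ∈ H)
    (hkG : k ∉ G) (hb : ∀ j < k, (j ∈ H ↔ j ∈ G)) : ∃ y ∈ G, k < y := by
  by_contra! h
  have hsub : G ⊆ H.erase k := fun y hy =>
    mem_erase.2 ⟨ne_of_mem_of_not_mem hy hkG,
      (hb y (lt_of_le_of_ne (h y hy) (ne_of_mem_of_not_mem hy hkG))).2 hy⟩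
  have := card_le_card hsub
  rw [card_erase_of_mem hkH] at this
  have := card_pos.2 ⟨k, hkH⟩
  omega

theorem lexGT_erase_maxElt {H G : Finset ℕ} (hcard : #H = #G) (h : lexGT H G) :
    H.erase (maxElt H) = G.erase (maxElt G) ∨
      lexGT (H.erase (maxElt H)) (G.erase (maxElt G)) := by
  obtain ⟨k, hkH, hkG, hb⟩ := h
  obtain ⟨y, hyG, hky⟩ := exists_gt_of_lexGT hcard.le hkH hkG hb
  have hkG' : k < maxElt G := hky.trans_le (le_maxElt hyG)
  rcases (le_maxElt hkH).eq_or_lt with hk | hk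
  · left
    rw [← hk]
    refine eq_of_subset_of_card_le (fun x hx => ?_) ?_
    · obtain ⟨hxk, hxH⟩ := mem_erase.1 hx
      have hxk' : x < k := lt_of_le_of_ne (hk ▸ le_maxElt hxH) hxk
      exact mem_erase.2 ⟨by omega, (hb x hxk').1 hxH⟩
    · rw [card_erase_of_mem (maxElt_mem ⟨y, hyG⟩), card_erase_of_mem hkH, hcard]
  · right
    refine ⟨k, mem_erase.2 ⟨hk.ne, hkH⟩, fun h => hkG (mem_of_mem_erase h), fun j hj => ?_⟩
    rw [mem_erase, mem_erase, hb j hj]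
    exact and_congr_left fun _ => iff_of_true (by omega) (by omega)

theorem IsLexSet.shad {L : Finset (Finset ℕ)} (hL : IsLexSet n d t L) :
    IsLexSet n (d + 1) t (shad t n d L) := by
  refine ⟨filter_subset _ _, fun G hG H hH hHG =>
    mem_shad.2 ⟨hH, H.erase (maxElt H), ?_, erase_subset _ _⟩⟩
  have hGL := hL.isSSS.erase_maxElt_mem hG
  rcases lexGT_erase_maxElt (by rw [(mem_M.1 hH).2.1, (mem_M.1 (mem_shad.1 hG).1).2.1]) hHG
    with heq | hgt
  · rwa [heq]
  · exact hL.2 _ hGL _ (erase_mem_M hH (maxElt_mem_of_mem_M hH)) hgt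

end Shadow

section Link

variable {n d t : ℕ}

def link (n d t : ℕ) (A : Finset (Finset ℕ)) : Finset (Finset ℕ) :=
  {G ∈ M (n - t) d t | insert n G ∈ A}

theorem link_subset_M {A : Finset (Finset ℕ)} : link n d t A ⊆ M (n - t) d t := filter_subset _ _

theorem card_link (ht : 1 ≤ t) {A : Finset (Finset ℕ)} (hA : A ⊆ M n (d + 1) t) :
    #(link n d t A) = #{F ∈ A | n ∈ F} := by
  refine card_nbij' (insert n) (erase · n) (fun G hG => ?_) (fun F hF => ?_) (fun G hG => ?_)
    (fun F hF => insert_erase (mem_filter.1 hF).2)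
  · exact mem_filter.2 ⟨(mem_filter.1 hG).2, mem_insert_self n G⟩
  · obtain ⟨hFA, hnF⟩ := mem_filter.1 hF
    refine mem_filter.2 ⟨?_, by rwa [insert_erase hnF]⟩
    have hmax : maxElt F = n :=
      le_antisymm (Finset.sup_le fun x hx => le_of_mem_M (hA hFA) hx) (le_maxElt hnF)
    have hG := erase_maxElt_mem_M (hA hFA)
    rwa [hmax] at hG
  · have hGM := (mem_filter.1 hG).1
    refine erase_insert fun hn => ?_
    have := le_of_mem_M hGM hn
    have := one_le_of_mem_M hGM hn
    omega

theorem mLe_pred_add_card_link (ht : 1 ≤ t) {A : Finset (Finset ℕ)} (hA : A ⊆ M n (d + 1) t) :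
    mLe (n - 1) A + #(link n d t A) = #A := by
  rw [card_link ht hA, mLe,
    ← card_filter_add_card_filter_not (s := A) (fun F => ∀ j ∈ F, j ≤ n - 1)]
  congr 2
  refine filter_congr fun F hF => ⟨fun hn hall => ?_, fun h => ?_⟩
  · have := one_le_of_mem_M (hA hF) hn
    have := hall n hn
    omega
  · obtain ⟨j, hj, hjn⟩ := not_forall₂.1 h
    obtain rfl : j = n := by have := le_of_mem_M (hA hF) hj; omega
    exact hj

theorem IsSSS.isSSS_link (ht : 1 ≤ t) {L : Finset (Finset ℕ)} (hL : IsSSS n (d + 1) t L) :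
    IsSSS (n - t) d t (link n d t L) := by
  refine ⟨link_subset_M, fun G hG j hj i hij hiG hM => mem_filter.2 ⟨hM, ?_⟩⟩
  obtain ⟨hGM, hnG⟩ := mem_filter.1 hG
  have := le_of_mem_M hGM hj
  have := one_le_of_mem_M hGM hj
  have hrw : insert i ((insert n G).erase j) = insert n (insert i (G.erase j)) := by
    rw [erase_insert_of_ne (by omega), insert_comm]
  have hmem := hL.2 (insert n G) hnG j (mem_insert_of_mem hj) i hij
    (fun h => (mem_insert.1 h).elim (by omega) hiG)
    (hrw ▸ insert_mem_M ht (M_mono (Nat.sub_le n t) hM) (self_mem_topExt (by omega) hM))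
  rwa [hrw] at hmem

theorem IsSSS.card_fiber_of_mem_link (ht : 1 ≤ t) {L : Finset (Finset ℕ)}
    (hL : IsSSS n (d + 1) t L) {G : Finset ℕ} (hG : G ∈ link n d t L) :
    #(fiber L G) = #(topExt n t G) := by
  obtain ⟨hGM, hnG⟩ := mem_filter.1 hG
  rw [card_fiber ht hL.1, filter_true_of_mem fun k hk => ?_]
  rcases (mem_Icc.1 (mem_filter.1 hk).1).2.eq_or_lt with rfl | hkn
  · exact hnG
  have hnG' : n ∉ G := notMem_of_mem_topExt ht (self_mem_topExt (by omega) hGM)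
  have hmem := hL.2 _ hnG n (mem_insert_self n G) k hkn
    (fun h => (mem_insert.1 h).elim hkn.ne (notMem_of_mem_topExt ht hk))
    (by rw [erase_insert hnG']; exact insert_mem_M ht (M_mono (Nat.sub_le n t) hGM) hk)
  rwa [erase_insert hnG'] at hmem

theorem IsSSS.sum_card_topExt_link_le (ht : 1 ≤ t) {L : Finset (Finset ℕ)}
    (hL : IsSSS n (d + 1) t L) : ∑ G ∈ link n d t L, #(topExt n t G) ≤ #L := by
  rw [card_eq_sum_card_fiber hL.1]
  calc ∑ G ∈ link n d t L, #(topExt n t G) = ∑ G ∈ link n d t L, #(fiber L G) :=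
        sum_congr rfl fun G hG => (hL.card_fiber_of_mem_link ht hG).symm
    _ ≤ _ := sum_le_sum_of_subset link_subset_M

theorem IsLexSet.insert_mem_of_lexGT (ht : 1 ≤ t) {L : Finset (Finset ℕ)}
    (hL : IsLexSet n (d + 1) t L) {F H : Finset ℕ} (hF : F ∈ L) (hH : H ∈ M (n - t) d t)
    (hHF : lexGT H (F.erase (maxElt F))) : insert n H ∈ L := by
  have hGM := erase_maxElt_mem_M (hL.1 hF)
  obtain ⟨k, hkH, hkG, hb⟩ := hHF
  obtain ⟨y, hyG, hky⟩ :=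
    exists_gt_of_lexGT (by rw [(mem_M.1 hH).2.1, (mem_M.1 hGM).2.1]) hkH hkG hb
  have hyF := le_maxElt (mem_of_mem_erase hyG)
  have := le_of_mem_M hGM hyG
  refine hL.2 F hF _ (insert_mem_M ht (M_mono (Nat.sub_le n t) hH) (self_mem_topExt (by omega) hH))
    ⟨k, mem_insert_of_mem hkH, fun hkF => hkG (mem_erase.2 ⟨by omega, hkF⟩), fun j hj => ?_⟩
  rw [mem_insert, hb j hj, mem_erase]
  exact ⟨fun h => h.elim (by omega) And.right, fun h => Or.inr ⟨by omega, h⟩⟩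

theorem IsLexSet.mem_lexSeg_of_fiber_nonempty (ht : 1 ≤ t) {L : Finset (Finset ℕ)}
    (hL : IsLexSet n (d + 1) t L) {G : Finset ℕ} (hG : G ∈ M (n - t) d t)
    (hne : (fiber L G).Nonempty) : G ∈ lexSeg (n - t) d t (#(link n d t L) + 1) := by
  obtain ⟨F, hF⟩ := hne
  obtain ⟨hFL, rfl⟩ := mem_filter.1 hF
  refine mem_filter.2 ⟨hG, Nat.lt_succ_of_le (card_le_card fun H hH => ?_)⟩
  obtain ⟨hHM, hHG⟩ := mem_filter.1 hH
  exact mem_filter.2 ⟨hHM, hL.insert_mem_of_lexGT ht hFL hHM hHG⟩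

theorem IsLexSet.card_lt_sum_card_topExt (ht : 1 ≤ t) (hn : 1 ≤ n) {L : Finset (Finset ℕ)}
    (hL : IsLexSet n (d + 1) t L) (hu : #(link n d t L) < #(M (n - t) d t)) :
    #L < ∑ G ∈ lexSeg (n - t) d t (#(link n d t L) + 1), #(topExt n t G) := by
  set S := lexSeg (n - t) d t (#(link n d t L) + 1)
  have hcardS : #(link n d t L) < #S := by rw [card_lexSeg_of_le hu]; omega
  obtain ⟨G₀, hG₀S, hG₀⟩ := exists_mem_notMem_of_card_lt_card hcardS
  have hG₀M : G₀ ∈ M (n - t) d t := lexSeg_subset_M _ hG₀S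
  have hvanish : ∀ G ∈ M (n - t) d t, G ∉ S → #(fiber L G) = 0 := fun G hG hGS =>
    card_eq_zero.2 (not_nonempty_iff_eq_empty.1 fun hne =>
      hGS (hL.mem_lexSeg_of_fiber_nonempty ht hG hne))
  rw [card_eq_sum_card_fiber hL.1, ← sum_subset (lexSeg_subset_M _) hvanish]
  refine sum_lt_sum (fun G _ => ?_) ⟨G₀, hG₀S, ?_⟩ <;> rw [card_fiber ht hL.1]
  · exact card_filter_le _ _
  · exact card_lt_card (filter_ssubset.2
      ⟨n, self_mem_topExt hn hG₀M, fun h => hG₀ (mem_filter.2 ⟨hG₀M, h⟩)⟩)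

theorem sum_card_topExt_lexSeg_add_le (hn : 1 ≤ n) {a b : ℕ} (hab : a ≤ b)
    (hb : b ≤ #(M (n - t) d t)) :
    ∑ G ∈ lexSeg (n - t) d t a, #(topExt n t G) + (b - a) ≤
      ∑ G ∈ lexSeg (n - t) d t b, #(topExt n t G) := by
  have hsub : lexSeg (n - t) d t a ⊆ lexSeg (n - t) d t b := lexSeg_mono hab
  have hcard : #(lexSeg (n - t) d t b \ lexSeg (n - t) d t a) = b - a := by
    rw [card_sdiff_of_subset hsub, card_lexSeg_of_le hb, card_lexSeg_of_le (hab.trans hb)]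
  rw [← sum_sdiff hsub, add_comm]
  gcongr
  calc b - a = #(lexSeg (n - t) d t b \ lexSeg (n - t) d t a) • 1 := by simp [hcard]
    _ ≤ _ := card_nsmul_le_sum _ _ 1 fun G hG =>
      card_pos.2 ⟨n, self_mem_topExt hn (lexSeg_subset_M _ (mem_sdiff.1 hG).1)⟩

end Link

section Comparison

variable {n d t : ℕ}

theorem mLe_pred_le_of_isLexSet (ht : 1 ≤ t) (hn : 1 ≤ n)
    (ih : ∀ {L L' : Finset (Finset ℕ)}, IsSSS (n - t) d t L → IsLexSet (n - t) d t L' →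
      #L' ≤ #L → ∀ i, mLe i L' ≤ mLe i L)
    {L L' : Finset (Finset ℕ)} (hL : IsSSS n (d + 1) t L) (hL' : IsLexSet n (d + 1) t L')
    (hc : #L' ≤ #L) : mLe (n - 1) L' ≤ mLe (n - 1) L := by
  have hsplit := mLe_pred_add_card_link ht hL.1
  have hsplit' := mLe_pred_add_card_link ht hL'.1
  by_cases hu : #(link n d t L) ≤ #(link n d t L')
  · omega
  have hle : #(link n d t L) ≤ #(M (n - t) d t) := card_le_card link_subset_M
  have h₁ := hL'.card_lt_sum_card_topExt ht hn (by omega)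
  have h₂ := sum_card_topExt_lexSeg_add_le hn (by omega : #(link n d t L') + 1 ≤ _) hle
  have h₃ : ∑ G ∈ lexSeg (n - t) d t #(link n d t L), #(topExt n t G) ≤
      ∑ G ∈ link n d t L, #(topExt n t G) := by
    rw [sum_card_topExt (lexSeg_subset_M _), sum_card_topExt link_subset_M]
    exact sum_le_sum fun k _ => ih (hL.isSSS_link ht) (isLexSet_lexSeg _)
      (by rw [card_lexSeg]; exact min_le_left _ _) _
  have h₄ := hL.sum_card_topExt_link_le ht
  omega

theorem mLe_le_mLe_of_isLexSet (ht : 1 ≤ t) {L L' : Finset (Finset ℕ)} (hL : IsSSS n d t L)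
    (hL' : IsLexSet n d t L') (hc : #L' ≤ #L) (i : ℕ) : mLe i L' ≤ mLe i L := by
  induction d generalizing n L L' i with
  | zero =>
    have hall : ∀ A ⊆ M n 0 t, mLe i A = #A := fun A hA => by
      rw [mLe, filter_true_of_mem fun F hF => ?_]
      simp [card_eq_zero.1 (mem_M.1 (hA hF)).2.1]
    rwa [hall L' hL'.1, hall L hL.1]
  | succ d ihd =>
    induction n generalizing L L' with
    | zero => rwa [mLe_of_le hL'.1 (Nat.zero_le i), mLe_of_le hL.1 (Nat.zero_le i)]
    | succ m ihn =>
      by_cases hi : m + 1 ≤ i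
      · rwa [mLe_of_le hL'.1 hi, mLe_of_le hL.1 hi]
      have key := mLe_pred_le_of_isLexSet ht (by omega : 1 ≤ m + 1)
        (fun hL hL' hc i => ihd hL hL' hc i) hL hL' hc
      rw [Nat.add_sub_cancel, mLe_eq_card_inter hL'.1, mLe_eq_card_inter hL.1] at key
      rw [← mLe_inter_M hL'.1 (by omega : i ≤ m), ← mLe_inter_M hL.1 (by omega : i ≤ m)]
      exact ihn (hL.inter_M m.le_succ) (hL'.inter_M m.le_succ) key

theorem card_shad_le_of_isLexSet (ht : 1 ≤ t) {L L' : Finset (Finset ℕ)} (hL : IsSSS n d t L)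
    (hL' : IsLexSet n d t L') (hc : #L' ≤ #L) : #(shad t n d L') ≤ #(shad t n d L) := by
  rw [hL'.isSSS.card_shad ht, hL.card_shad ht, sum_card_topExt hL'.1, sum_card_topExt hL.1]
  exact sum_le_sum fun k _ => mLe_le_mLe_of_isLexSet ht hL hL' hc (k - t)

end Comparison

/-- existence and uniqueness of `I^{t-lex}`: for any `t`-spread strongly
stable collection `(L_d)` with `shad_t(L_d) ⊆ L_{d+1}`, there is a unique collection
`(L'_d)` of `t`-spread lex sets with `|L'_d| = |L_d|` and `shad_t(L'_d) ⊆ L'_{d+1}`. -/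
theorem exists_tlex (n t : ℕ) (ht : 1 ≤ t) (L : ℕ → Finset (Finset ℕ))
    (hss : ∀ d, 1 ≤ d → IsSSS n d t (L d))
    (hshad : ∀ d, 1 ≤ d → shad t n d (L d) ⊆ L (d + 1)) :
    ∃ L' : ℕ → Finset (Finset ℕ),
      (∀ d, 1 ≤ d → IsLexSet n d t (L' d) ∧ (L' d).card = (L d).card ∧
        shad t n d (L' d) ⊆ L' (d + 1)) ∧
      (∀ L'' : ℕ → Finset (Finset ℕ),
        (∀ d, 1 ≤ d → IsLexSet n d t (L'' d) ∧ (L'' d).card = (L d).card ∧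
          shad t n d (L'' d) ⊆ L'' (d + 1)) →
        ∀ d, 1 ≤ d → L'' d = L' d) := by
  have hlex (d : ℕ) : IsLexSet n d t (lexSeg n d t #(L d)) := isLexSet_lexSeg _
  have hcard (d : ℕ) (hd : 1 ≤ d) : #(lexSeg n d t #(L d)) = #(L d) :=
    card_lexSeg_of_le (card_le_card (hss d hd).1)
  refine ⟨fun d => lexSeg n d t #(L d), fun d hd => ⟨hlex d, hcard d hd, ?_⟩, ?_⟩
  · refine (hlex d).shad.subset_of_card_le (hlex (d + 1)) ?_
    calc #(shad t n d (lexSeg n d t #(L d)))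
        ≤ #(shad t n d (L d)) := card_shad_le_of_isLexSet ht (hss d hd) (hlex d) (hcard d hd).le
      _ ≤ #(L (d + 1)) := card_le_card (hshad d hd)
      _ = #(lexSeg n (d + 1) t #(L (d + 1))) := (hcard (d + 1) (by omega)).symm
  · intro L'' hL'' d hd
    obtain ⟨hlex'', hcard'', -⟩ := hL'' d hd
    rw [hlex''.eq_lexSeg, hcard'']
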